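/- Let d ≥ 1, n = d(d+1), and let b_1, …, b_n be unit vectors in ℂ^d such that for every j ≠ k, |⟨b_j, b_k⟩|² equals either 0 or 1/d. Then the number of unordered pairs {j,k}, j ≠ k, with ⟨b_j, b_k⟩ = 0 is exactly (d+1)·d(d-1)/2. -/

import Mathlib

/-!
Write `t j k = |⟨b j, b k⟩|²`; it is `1` on the diagonal and `0` or `1/d` off it. For Hermitian
matrices `A j` the double sum `∑ j, ∑ k, tr (A j * A k) = ‖∑ j, A j‖²` is nonnegative. Taking for
`A j` the traceless part of the projection onto `b j`, the summand is `t - 1/d`; taking the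
harmonic part of `(b j ⊗ b j)(b j ⊗ b j)*` on the symmetric square, it is a positive multiple of
the zonal polynomial `(d+1)(d+2) t² - 4(d+1) t + 2`. As `t` takes only three values, both sums are
affine in the number `2e` of ordered orthogonal pairs: the first gives `2e ≤ n(d-1)` and, when
`n = d(d+1)`, the second gives `2e ≥ n(d-1)`.
-/

open Matrix Kronecker Finset ComplexOrder

namespace OrthoUnbiased

section Swap

variable (ι R : Type*) [DecidableEq ι] [CommSemiring R]

def swapMatrix : Matrix (ι × ι) (ι × ι) R :=
  Matrix.of fun p q => if p.swap = q then 1 else 0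

variable {ι R}

lemma isHermitian_swapMatrix [StarRing R] : (swapMatrix ι R).IsHermitian := by
  ext p q
  simp only [conjTranspose_apply, swapMatrix, of_apply, apply_ite star, star_one, star_zero]
  congr 1
  exact propext ⟨fun h => h ▸ q.swap_swap, fun h => h ▸ p.swap_swap⟩

variable [Fintype ι]

lemma mul_swapMatrix_apply (M : Matrix (ι × ι) (ι × ι) R) (p q : ι × ι) :
    (M * swapMatrix ι R) p q = M p q.swap := by
  simp [swapMatrix, Matrix.mul_apply, Prod.swap_eq_iff_eq_swap]

lemma swapMatrix_mul_apply (M : Matrix (ι × ι) (ι × ι) R) (p q : ι × ι) :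
    (swapMatrix ι R * M) p q = M p.swap q := by
  simp [swapMatrix, Matrix.mul_apply]

lemma swapMatrix_mul_swapMatrix : swapMatrix ι R * swapMatrix ι R = 1 := by
  ext p q
  rw [mul_swapMatrix_apply]
  simp [swapMatrix, Matrix.one_apply]

lemma trace_swapMatrix : (swapMatrix ι R).trace = Fintype.card ι := by
  simp only [Matrix.trace, Matrix.diag, swapMatrix, of_apply, Fintype.sum_prod_type,
    Prod.swap_prod_mk, Prod.mk.injEq]
  simp [eq_comm]

lemma kronecker_mul_swapMatrix (A B : Matrix ι ι R) :
    (A ⊗ₖ B) * swapMatrix ι R = swapMatrix ι R * (B ⊗ₖ A) := by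
  ext p q
  rw [mul_swapMatrix_apply, swapMatrix_mul_apply]
  simp [mul_comm]

lemma trace_kronecker_mul_swapMatrix (A B : Matrix ι ι R) :
    ((A ⊗ₖ B) * swapMatrix ι R).trace = (A * B).trace := by
  simp only [Matrix.trace, Matrix.diag, mul_swapMatrix_apply]
  simp [Matrix.mul_apply, Fintype.sum_prod_type]

end Swap

section Symmetrizer

variable {ι : Type*} [DecidableEq ι]

noncomputable def symmetrizer : Matrix (ι × ι) (ι × ι) ℂ := (2⁻¹ : ℂ) • (1 + swapMatrix ι ℂ)

lemma isHermitian_symmetrizer : (symmetrizer : Matrix (ι × ι) _ ℂ).IsHermitian :=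
  (isHermitian_one.add isHermitian_swapMatrix).smul (IsSelfAdjoint.natCast 2).inv₀

variable [Fintype ι]

lemma symmetrizer_mul_self : symmetrizer * symmetrizer = (symmetrizer : Matrix (ι × ι) _ ℂ) := by
  rw [symmetrizer, smul_mul_smul_comm, add_mul, one_mul, mul_add, mul_one,
    swapMatrix_mul_swapMatrix]
  module

lemma trace_mul_symmetrizer (X : Matrix (ι × ι) (ι × ι) ℂ) :
    (X * symmetrizer).trace = (X.trace + (X * swapMatrix ι ℂ).trace) / 2 := by
  rw [symmetrizer, mul_smul_comm, mul_add, mul_one, trace_smul, trace_add, smul_eq_mul]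
  ring

lemma trace_symmetrizer :
    (symmetrizer : Matrix (ι × ι) _ ℂ).trace = Fintype.card ι * (Fintype.card ι + 1) / 2 := by
  rw [← one_mul symmetrizer, trace_mul_symmetrizer, one_mul, trace_swapMatrix, trace_one,
    Fintype.card_prod]
  push_cast
  ring

lemma commute_symmetrizer_of_commute_swapMatrix {X : Matrix (ι × ι) (ι × ι) ℂ}
    (h : Commute X (swapMatrix ι ℂ)) : Commute X symmetrizer :=
  ((Commute.one_right X).add_right h).smul_right _

lemma mul_symmetrizer_of_mul_swapMatrix {X : Matrix (ι × ι) (ι × ι) ℂ}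
    (h : X * swapMatrix ι ℂ = X) : X * symmetrizer = X := by
  rw [symmetrizer, mul_smul_comm, mul_add, mul_one, h]
  module

lemma symmetrizer_mul_of_swapMatrix_mul {X : Matrix (ι × ι) (ι × ι) ℂ}
    (h : swapMatrix ι ℂ * X = X) : symmetrizer * X = X := by
  rw [symmetrizer, smul_mul_assoc, add_mul, one_mul, h]
  module

end Symmetrizer

section Projection

variable {ι : Type*}

def proj (v : EuclideanSpace ℂ ι) : Matrix ι ι ℂ := vecMulVec v.ofLp (star v.ofLp)

lemma isHermitian_proj (v : EuclideanSpace ℂ ι) : (proj v).IsHermitian := by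
  ext a c
  simp [proj, vecMulVec_apply, mul_comm]

variable [Fintype ι]

lemma trace_proj {v : EuclideanSpace ℂ ι} (hv : ‖v‖ = 1) : (proj v).trace = 1 := by
  rw [proj, trace_vecMulVec, ← EuclideanSpace.inner_eq_star_dotProduct,
    inner_self_eq_norm_sq_to_K, hv]
  simp

lemma trace_proj_mul_proj (v w : EuclideanSpace ℂ ι) :
    (proj v * proj w).trace = ((‖inner ℂ v w‖ ^ 2 : ℝ) : ℂ) := by
  rw [proj, proj, vecMulVec_mul_vecMulVec, trace_vecMulVec, dotProduct_smul,
    ← EuclideanSpace.inner_eq_star_dotProduct, dotProduct_comm,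
    ← EuclideanSpace.inner_eq_star_dotProduct, smul_eq_mul, ← inner_conj_symm v w,
    Complex.conj_mul', Complex.norm_conj]
  push_cast
  ring

variable [DecidableEq ι]

noncomputable def tracelessProj (v : EuclideanSpace ℂ ι) : Matrix ι ι ℂ :=
  proj v - ((Fintype.card ι : ℂ)⁻¹) • 1

lemma isHermitian_tracelessProj (v : EuclideanSpace ℂ ι) : (tracelessProj v).IsHermitian :=
  (isHermitian_proj v).sub (isHermitian_one.smul (IsSelfAdjoint.natCast _).inv₀)

lemma trace_tracelessProj_mul_tracelessProj {v w : EuclideanSpace ℂ ι} (hv : ‖v‖ = 1)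
    (hw : ‖w‖ = 1) :
    (tracelessProj v * tracelessProj w).trace =
      ((‖inner ℂ v w‖ ^ 2 - (Fintype.card ι : ℝ)⁻¹ : ℝ) : ℂ) := by
  simp only [tracelessProj, sub_mul, mul_sub, smul_mul_assoc, mul_smul_comm, mul_one, one_mul,
    trace_sub, trace_smul, trace_one, trace_proj hv, trace_proj hw, trace_proj_mul_proj,
    smul_eq_mul]
  rcases eq_or_ne (Fintype.card ι : ℂ) 0 with h | h
  · simp [h]
  · push_cast
    field_simp
    ring

end Projection

section Sym2

variable {ι : Type*}

noncomputable def projKron (v : EuclideanSpace ℂ ι) : Matrix (ι × ι) (ι × ι) ℂ :=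
  proj v ⊗ₖ proj v

lemma isHermitian_projKron (v : EuclideanSpace ℂ ι) : (projKron v).IsHermitian := by
  rw [IsHermitian, projKron, conjTranspose_kronecker, isHermitian_proj v]

lemma trace_projKron [Fintype ι] {v : EuclideanSpace ℂ ι} (hv : ‖v‖ = 1) :
    (projKron v).trace = 1 := by
  rw [projKron, trace_kronecker, trace_proj hv, mul_one]

lemma trace_projKron_mul_projKron [Fintype ι] (v w : EuclideanSpace ℂ ι) :
    (projKron v * projKron w).trace = ((‖inner ℂ v w‖ ^ 2 : ℝ) : ℂ) ^ 2 := by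
  rw [projKron, projKron, ← mul_kronecker_mul, trace_kronecker, trace_proj_mul_proj, ← sq]

variable [DecidableEq ι]

noncomputable def projKronSum (v : EuclideanSpace ℂ ι) : Matrix (ι × ι) (ι × ι) ℂ :=
  proj v ⊗ₖ 1 + 1 ⊗ₖ proj v

lemma isHermitian_projKronSum (v : EuclideanSpace ℂ ι) : (projKronSum v).IsHermitian := by
  rw [IsHermitian, projKronSum, conjTranspose_add, conjTranspose_kronecker, conjTranspose_kronecker,
    isHermitian_proj v, conjTranspose_one]

variable [Fintype ι] (v w : EuclideanSpace ℂ ι)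

lemma projKron_mul_swapMatrix : projKron v * swapMatrix ι ℂ = projKron v := by
  ext p q
  rw [mul_swapMatrix_apply]
  simp only [projKron, proj, kroneckerMap_apply, vecMulVec_apply, Prod.fst_swap, Prod.snd_swap]
  ring

lemma swapMatrix_mul_projKron : swapMatrix ι ℂ * projKron v = projKron v := by
  ext p q
  rw [swapMatrix_mul_apply]
  simp only [projKron, proj, kroneckerMap_apply, vecMulVec_apply, Prod.fst_swap, Prod.snd_swap]
  ring

lemma commute_projKronSum_swapMatrix : Commute (projKronSum v) (swapMatrix ι ℂ) := by
  rw [Commute, SemiconjBy, projKronSum, add_mul, kronecker_mul_swapMatrix, kronecker_mul_swapMatrix,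
    mul_add, add_comm]

lemma projKron_mul_symmetrizer : projKron v * symmetrizer = projKron v :=
  mul_symmetrizer_of_mul_swapMatrix (projKron_mul_swapMatrix v)

lemma symmetrizer_mul_projKron : symmetrizer * projKron v = projKron v :=
  symmetrizer_mul_of_swapMatrix_mul (swapMatrix_mul_projKron v)

lemma symmetrizer_mul_projKronSum :
    symmetrizer * projKronSum v = projKronSum v * symmetrizer :=
  (commute_symmetrizer_of_commute_swapMatrix (commute_projKronSum_swapMatrix v)).eq.symm

lemma trace_projKronSum_mul_projKronSum_mul_swapMatrix :
    (projKronSum v * projKronSum w * swapMatrix ι ℂ).trace = 4 * ((‖inner ℂ v w‖ ^ 2 : ℝ) : ℂ) := by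
  simp only [projKronSum, mul_add, add_mul, ← mul_kronecker_mul, trace_add,
    trace_kronecker_mul_swapMatrix, mul_one, one_mul, trace_proj_mul_proj]
  rw [norm_inner_symm w v]
  ring

variable {v w}

lemma trace_projKronSum (hv : ‖v‖ = 1) : (projKronSum v).trace = 2 * Fintype.card ι := by
  rw [projKronSum, trace_add, trace_kronecker, trace_kronecker, trace_proj hv, trace_one]
  ring

lemma trace_projKronSum_mul_swapMatrix (hv : ‖v‖ = 1) :
    (projKronSum v * swapMatrix ι ℂ).trace = 2 := by
  rw [projKronSum, add_mul, trace_add, trace_kronecker_mul_swapMatrix,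
    trace_kronecker_mul_swapMatrix, mul_one, one_mul, trace_proj hv]
  norm_num

lemma trace_projKron_mul_projKronSum (hv : ‖v‖ = 1) :
    (projKron v * projKronSum w).trace = 2 * ((‖inner ℂ v w‖ ^ 2 : ℝ) : ℂ) := by
  rw [projKron, projKronSum, mul_add, ← mul_kronecker_mul, ← mul_kronecker_mul, trace_add,
    trace_kronecker, trace_kronecker, mul_one, trace_proj hv, trace_proj_mul_proj]
  ring

lemma trace_projKronSum_mul_projKronSum (hv : ‖v‖ = 1) (hw : ‖w‖ = 1) :
    (projKronSum v * projKronSum w).trace =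
      2 * Fintype.card ι * ((‖inner ℂ v w‖ ^ 2 : ℝ) : ℂ) + 2 := by
  simp only [projKronSum, mul_add, add_mul, ← mul_kronecker_mul, trace_add, trace_kronecker,
    mul_one, one_mul, trace_proj hv, trace_proj hw, trace_proj_mul_proj, trace_one]
  ring

/-- `(d+1)(d+2)` times the component of `projKron v` orthogonal to the operators
`symmetrizer * (X ⊗ₖ 1 + 1 ⊗ₖ X) * symmetrizer`. -/
noncomputable def sym2Harmonic (v : EuclideanSpace ℂ ι) : Matrix (ι × ι) (ι × ι) ℂ :=
  (((Fintype.card ι + 1) * (Fintype.card ι + 2) : ℕ) : ℂ) • projKron v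
    - ((2 * (Fintype.card ι + 1) : ℕ) : ℂ) • (projKronSum v * symmetrizer) + (2 : ℂ) • symmetrizer

lemma isHermitian_sym2Harmonic (v : EuclideanSpace ℂ ι) : (sym2Harmonic v).IsHermitian := by
  have hLS : (projKronSum v * symmetrizer).IsHermitian := by
    rw [IsHermitian, conjTranspose_mul, isHermitian_symmetrizer, isHermitian_projKronSum,
      symmetrizer_mul_projKronSum]
  exact (((isHermitian_projKron v).smul (.natCast _)).sub (hLS.smul (.natCast _))).add
    (isHermitian_symmetrizer.smul (.ofNat 2))

lemma trace_sym2Harmonic_mul_sym2Harmonic (hv : ‖v‖ = 1) (hw : ‖w‖ = 1) :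
    (sym2Harmonic v * sym2Harmonic w).trace =
      (((Fintype.card ι + 1) * (Fintype.card ι + 2) *
        ((Fintype.card ι + 1) * (Fintype.card ι + 2) * (‖inner ℂ v w‖ ^ 2) ^ 2
          - 4 * (Fintype.card ι + 1) * ‖inner ℂ v w‖ ^ 2 + 2) : ℝ) : ℂ) := by
  have hKLS : projKron v * (projKronSum w * symmetrizer) = projKron v * projKronSum w := by
    rw [← symmetrizer_mul_projKronSum, ← mul_assoc, projKron_mul_symmetrizer]
  have hLSK : projKronSum v * symmetrizer * projKron w = projKronSum v * projKron w := by
    rw [mul_assoc, symmetrizer_mul_projKron]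
  have hLSLS : projKronSum v * symmetrizer * (projKronSum w * symmetrizer)
      = projKronSum v * projKronSum w * symmetrizer := by
    rw [mul_assoc, ← mul_assoc symmetrizer, symmetrizer_mul_projKronSum, mul_assoc,
      symmetrizer_mul_self, mul_assoc]
  have hLSS : projKronSum v * symmetrizer * symmetrizer = projKronSum v * symmetrizer := by
    rw [mul_assoc, symmetrizer_mul_self]
  have hSLS : symmetrizer * (projKronSum w * symmetrizer) = projKronSum w * symmetrizer := by
    rw [← mul_assoc, symmetrizer_mul_projKronSum, mul_assoc, symmetrizer_mul_self]
  simp only [sym2Harmonic, sub_mul, add_mul, mul_sub, mul_add, smul_mul_smul_comm, hKLS, hLSK,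
    hLSLS, hLSS, hSLS, projKron_mul_symmetrizer, symmetrizer_mul_projKron, symmetrizer_mul_self,
    trace_sub, trace_add, trace_smul, smul_eq_mul, trace_mul_symmetrizer,
    trace_projKron_mul_projKron, trace_projKron_mul_projKronSum hv,
    trace_mul_comm (projKronSum v) (projKron w), trace_projKron_mul_projKronSum hw,
    trace_projKronSum_mul_projKronSum hv hw, trace_projKronSum_mul_projKronSum_mul_swapMatrix,
    trace_projKronSum hv, trace_projKronSum hw, trace_projKronSum_mul_swapMatrix hv,
    trace_projKronSum_mul_swapMatrix hw, trace_projKron hv, trace_projKron hw, trace_symmetrizer,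
    norm_inner_symm w v]
  push_cast
  ring

end Sym2

lemma sum_sum_nonneg_of_trace_mul_eq {ι κ : Type*} [Fintype ι] [Fintype κ]
    {A : κ → Matrix ι ι ℂ} (hA : ∀ j, (A j).IsHermitian) {f : κ → κ → ℝ}
    (hf : ∀ j k, (A j * A k).trace = f j k) : 0 ≤ ∑ j, ∑ k, f j k := by
  set S := ∑ j, A j
  have hS : S.IsHermitian := isSelfAdjoint_sum _ fun j _ => hA j
  have hsum : (Sᴴ * S).trace = ((∑ j, ∑ k, f j k : ℝ) : ℂ) := by
    simp only [hS.eq, S, sum_mul_sum, trace_sum, hf]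
    push_cast
    rfl
  exact Complex.zero_le_real.mp (hsum ▸ (posSemidef_conjTranspose_mul_self S).trace_nonneg)

def orthogonalityGraph (𝕜 : Type*) {E κ : Type*} [RCLike 𝕜] [NormedAddCommGroup E]
    [InnerProductSpace 𝕜 E] (b : κ → E) : SimpleGraph κ where
  Adj j k := j ≠ k ∧ inner 𝕜 (b j) (b k) = 0
  symm := ⟨fun _ _ h => ⟨h.1.symm, inner_eq_zero_symm.mp h.2⟩⟩
  loopless := ⟨fun _ h => h.1 rfl⟩

section Kernel

variable {𝕜 E κ : Type*} [RCLike 𝕜] [NormedAddCommGroup E] [InnerProductSpace 𝕜 E]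

lemma edgeSet_orthogonalityGraph (b : κ → E) :
    (orthogonalityGraph 𝕜 b).edgeSet =
      {s | ∃ j k, j ≠ k ∧ s = s(j, k) ∧ inner 𝕜 (b j) (b k) = 0} := by
  ext s
  constructor
  · induction s using Sym2.ind with
    | _ j k => exact fun h => ⟨j, k, h.1, rfl, h.2⟩
  · rintro ⟨j, k, hne, rfl, h0⟩
    exact ⟨hne, h0⟩

variable [Fintype κ] {b : κ → E} [DecidableRel (orthogonalityGraph 𝕜 b).Adj]

lemma sum_kernel_eq_degree (g : ℝ → ℝ) {c : ℝ} (hnorm : ∀ j, ‖b j‖ = 1)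
    (hangles : ∀ j k, j ≠ k → ‖inner 𝕜 (b j) (b k)‖ ^ 2 = 0 ∨ ‖inner 𝕜 (b j) (b k)‖ ^ 2 = c)
    (j : κ) :
    ∑ k, g (‖inner 𝕜 (b j) (b k)‖ ^ 2) =
      Fintype.card κ * g c + (g 1 - g c) + (orthogonalityGraph 𝕜 b).degree j * (g 0 - g c) := by
  classical
  have hpoint : ∀ k, g (‖inner 𝕜 (b j) (b k)‖ ^ 2) = g c + (if j = k then g 1 - g c else 0)
      + (if (orthogonalityGraph 𝕜 b).Adj j k then g 0 - g c else 0) := by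
    intro k
    by_cases hjk : j = k
    · subst hjk
      simp [orthogonalityGraph, inner_self_eq_norm_sq_to_K, hnorm]
    · by_cases h0 : inner 𝕜 (b j) (b k) = 0
      · simp [orthogonalityGraph, hjk, h0]
      · have hc : ‖inner 𝕜 (b j) (b k)‖ ^ 2 = c :=
          (hangles j k hjk).resolve_left (by simpa using h0)
        simp [orthogonalityGraph, hjk, h0, hc]
  simp only [hpoint, sum_add_distrib, sum_const, card_univ, sum_ite_eq, mem_univ, if_true,
    ← sum_filter, ← SimpleGraph.neighborFinset_eq_filter,
    SimpleGraph.card_neighborFinset_eq_degree, nsmul_eq_mul]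

lemma sum_sum_kernel_eq_card_edgeFinset (g : ℝ → ℝ) {c : ℝ} (hnorm : ∀ j, ‖b j‖ = 1)
    (hangles : ∀ j k, j ≠ k → ‖inner 𝕜 (b j) (b k)‖ ^ 2 = 0 ∨ ‖inner 𝕜 (b j) (b k)‖ ^ 2 = c) :
    ∑ j, ∑ k, g (‖inner 𝕜 (b j) (b k)‖ ^ 2) =
      Fintype.card κ * (Fintype.card κ * g c + (g 1 - g c))
        + 2 * #(orthogonalityGraph 𝕜 b).edgeFinset * (g 0 - g c) := by
  simp only [sum_kernel_eq_degree g hnorm hangles, sum_add_distrib, sum_const, card_univ,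
    nsmul_eq_mul, ← sum_mul, ← Nat.cast_sum, SimpleGraph.sum_degrees_eq_twice_card_edges]
  push_cast
  ring

end Kernel

section Bounds

variable {ι κ : Type*} [Fintype ι] [DecidableEq ι] [Nonempty ι] [Fintype κ]
  {b : κ → EuclideanSpace ℂ ι} [DecidableRel (orthogonalityGraph ℂ b).Adj]

theorem two_mul_card_edgeFinset_le (hnorm : ∀ j, ‖b j‖ = 1)
    (hangles : ∀ j k, j ≠ k → ‖inner ℂ (b j) (b k)‖ ^ 2 = 0 ∨
      ‖inner ℂ (b j) (b k)‖ ^ 2 = (Fintype.card ι : ℝ)⁻¹) :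
    (2 * #(orthogonalityGraph ℂ b).edgeFinset : ℝ) ≤ Fintype.card κ * (Fintype.card ι - 1) := by
  set d : ℝ := (Fintype.card ι : ℝ)
  set N : ℝ := (Fintype.card κ : ℝ)
  set x : ℝ := 2 * #(orthogonalityGraph ℂ b).edgeFinset
  set g : ℝ → ℝ := fun t => t - d⁻¹
  have h : 0 ≤ ∑ j, ∑ k, g (‖inner ℂ (b j) (b k)‖ ^ 2) :=
    sum_sum_nonneg_of_trace_mul_eq (fun j => isHermitian_tracelessProj (b j))
      fun j k => trace_tracelessProj_mul_tracelessProj (hnorm j) (hnorm k)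
  rw [sum_sum_kernel_eq_card_edgeFinset g hnorm hangles] at h
  have hd : 0 < d := Nat.cast_pos.mpr Fintype.card_pos
  have key : N * (d - 1) - x = d * (N * (N * g d⁻¹ + (g 1 - g d⁻¹)) + x * (g 0 - g d⁻¹)) := by
    simp only [g]
    field_simp
    ring
  rw [← sub_nonneg, key]
  exact mul_nonneg hd.le h

theorem le_two_mul_card_edgeFinset (hnorm : ∀ j, ‖b j‖ = 1)
    (hangles : ∀ j k, j ≠ k → ‖inner ℂ (b j) (b k)‖ ^ 2 = 0 ∨
      ‖inner ℂ (b j) (b k)‖ ^ 2 = (Fintype.card ι : ℝ)⁻¹) :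
    Fintype.card κ * (Fintype.card ι - 1) *
        ((Fintype.card κ - 1) * (Fintype.card ι + 2) - Fintype.card ι ^ 3) ≤
      (2 * #(orthogonalityGraph ℂ b).edgeFinset : ℝ) *
        ((3 * Fintype.card ι - 2) * (Fintype.card ι + 1)) := by
  set d : ℝ := (Fintype.card ι : ℝ)
  set N : ℝ := (Fintype.card κ : ℝ)
  set x : ℝ := 2 * #(orthogonalityGraph ℂ b).edgeFinset
  set g : ℝ → ℝ := fun t => (d + 1) * (d + 2) * ((d + 1) * (d + 2) * t ^ 2 - 4 * (d + 1) * t + 2)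
  have h : 0 ≤ ∑ j, ∑ k, g (‖inner ℂ (b j) (b k)‖ ^ 2) :=
    sum_sum_nonneg_of_trace_mul_eq (fun j => isHermitian_sym2Harmonic (b j))
      fun j k => trace_sym2Harmonic_mul_sym2Harmonic (hnorm j) (hnorm k)
  rw [sum_sum_kernel_eq_card_edgeFinset g hnorm hangles] at h
  have hd : 0 < d := Nat.cast_pos.mpr Fintype.card_pos
  have key : x * ((3 * d - 2) * (d + 1)) - N * (d - 1) * ((N - 1) * (d + 2) - d ^ 3)
      = d ^ 2 / ((d + 1) * (d + 2)) * (N * (N * g d⁻¹ + (g 1 - g d⁻¹)) + x * (g 0 - g d⁻¹)) := by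
    simp only [g]
    field_simp
    ring
  rw [← sub_nonneg, key]
  exact mul_nonneg (by positivity) h

end Bounds

end OrthoUnbiased

open OrthoUnbiased in
/-- Let `d ≥ 1`, `n = d(d+1)`, and let `b 1, …, b n` be unit vectors in `ℂ^d`
such that for every `j ≠ k`, `|⟨b j, b k⟩|²` equals either `0` or `1/d`.  Then the number of
unordered pairs `{j,k}`, `j ≠ k`, with `⟨b j, b k⟩ = 0` is exactly `(d+1)·d·(d-1)/2`. -/
theorem card_orthogonal_pairs_eq
    (d n : ℕ) (hd : 1 ≤ d) (hn : n = d * (d + 1))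
    (b : Fin n → EuclideanSpace ℂ (Fin d))
    (hnorm : ∀ j, ‖b j‖ = 1)
    (hangles : ∀ j k, j ≠ k →
      ‖(inner ℂ (b j) (b k) : ℂ)‖ ^ 2 = 0 ∨ ‖(inner ℂ (b j) (b k) : ℂ)‖ ^ 2 = 1 / d) :
    {s : Sym2 (Fin n) | ∃ j k, j ≠ k ∧ s = s(j, k) ∧ (inner ℂ (b j) (b k) : ℂ) = 0}.ncard =
      (d + 1) * d * (d - 1) / 2 := by
  classical
  have : Nonempty (Fin d) := ⟨⟨0, hd⟩⟩
  have hangles' : ∀ j k, j ≠ k → ‖inner ℂ (b j) (b k)‖ ^ 2 = 0 ∨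
      ‖inner ℂ (b j) (b k)‖ ^ 2 = (Fintype.card (Fin d) : ℝ)⁻¹ := by
    simpa only [Fintype.card_fin, one_div] using hangles
  have hupper := two_mul_card_edgeFinset_le hnorm hangles'
  have hlower := le_two_mul_card_edgeFinset hnorm hangles'
  simp only [Fintype.card_fin, hn, Nat.cast_mul, Nat.cast_add, Nat.cast_one] at hupper hlower
  have hdR : (1 : ℝ) ≤ d := by exact_mod_cast hd
  rw [show ((d : ℝ) * (d + 1) - 1) * (d + 2) - d ^ 3 = (3 * d - 2) * (d + 1) by ring] at hlower
  have hedges : 2 * #(orthogonalityGraph ℂ b).edgeFinset = (d + 1) * d * (d - 1) := by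
    have h := le_antisymm hupper (le_of_mul_le_mul_right hlower (by nlinarith))
    have hcast : ((2 * #(orthogonalityGraph ℂ b).edgeFinset : ℕ) : ℝ) =
        ((d + 1) * d * (d - 1) : ℕ) := by
      push_cast [Nat.cast_sub hd]
      linarith
    exact_mod_cast hcast
  rw [← edgeSet_orthogonalityGraph, ← SimpleGraph.coe_edgeFinset, Set.ncard_coe_finset, ← hedges,
    Nat.mul_div_cancel_left _ two_pos]
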